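/- Additivity of the odd index functional under composition: let A, B : ℝ → Matrix n n ℂ be Schwartz functions such that I + A(t) and I + B(t) are invertible for every t ∈ ℝ, and set C = A + B + A·B (pointwise matrix product), so that I + C(t) = (I + A(t))·(I + B(t)) is invertible for every t. Then ind(I+C) = ind(I+A) + ind(I+B), where ind(I+A) = (1/(2πi)) ∫_ℝ tr((I + A(t))⁻¹ · A′(t)) dt. -/

import Mathlib

/-!
Since `1 + C = (1 + A) * (1 + B)`, the product rule and the cyclicity of the trace give
`tr((XY)⁻¹ (XY)′) = tr(X⁻¹ X′) + tr(Y⁻¹ Y′)` pointwise, so the integrand of `ind(I+C)` is the sum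
of those of `ind(I+A)` and `ind(I+B)`. Both are integrable: `(1 + A)⁻¹` is continuous and tends
to `1` at infinity, hence is bounded, while `A′` is again a Schwartz function.
-/

attribute [local instance] Matrix.normedAddCommGroup Matrix.normedSpace

open MeasureTheory

noncomputable section

/-- The odd index functional `ind(I+A) = (1/(2πi)) ∫_ℝ tr((I + A(t))⁻¹ · A′(t)) dt`. -/
def oddIndex {n : ℕ} (A : ℝ → Matrix (Fin n) (Fin n) ℂ) : ℂ :=
  (1 / (2 * Real.pi * Complex.I)) *
    ∫ t : ℝ, Matrix.trace ((1 + A t)⁻¹ * deriv A t)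

open Filter Topology Matrix

theorem Matrix.trace_inv_mul_leibniz {m R : Type*} [Fintype m] [DecidableEq m] [CommRing R]
    {X Y dX dY : Matrix m m R} (hX : IsUnit X) (hY : IsUnit Y) :
    trace ((X * Y)⁻¹ * (dX * Y + X * dY)) = trace (X⁻¹ * dX) + trace (Y⁻¹ * dY) := by
  rw [isUnit_iff_isUnit_det] at hX hY
  rw [mul_inv_rev, Matrix.mul_add, trace_add, Matrix.mul_assoc, Matrix.mul_assoc,
    nonsing_inv_mul_cancel_left _ _ hX]
  congr 1
  rw [trace_mul_comm, Matrix.mul_assoc, Matrix.mul_assoc, mul_nonsing_inv _ hY, Matrix.mul_one]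

theorem Continuous.exists_norm_le_of_tendsto_cocompact {X E : Type*} [TopologicalSpace X]
    [SeminormedAddCommGroup E] {f : X → E} {l : E} (hf : Continuous f)
    (hl : Tendsto f (cocompact X) (𝓝 l)) : ∃ C, ∀ x, ‖f x‖ ≤ C := by
  obtain ⟨K, hK, hKf⟩ := mem_cocompact.mp (hl.norm.eventually (ge_mem_nhds (lt_add_one ‖l‖)))
  obtain ⟨C, hC⟩ := hK.exists_bound_of_continuousOn hf.continuousOn
  refine ⟨max C (‖l‖ + 1), fun x => ?_⟩
  by_cases hx : x ∈ K
  · exact le_max_of_le_left (hC x hx)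
  · exact le_max_of_le_right (hKf hx)

section MatrixAnalysis

variable {m 𝕜 : Type*} [Fintype m] [DecidableEq m] [RCLike 𝕜]

theorem Matrix.continuousAt_inv_of_isUnit {X : Matrix m m 𝕜} (hX : IsUnit X) :
    ContinuousAt Inv.inv X := by
  refine continuousAt_matrix_inv X ?_
  rw [Ring.inverse_eq_inv']
  exact continuousAt_inv₀ ((isUnit_iff_isUnit_det X).mp hX).ne_zero

theorem Continuous.matrix_inv_one_add {X : Type*} [TopologicalSpace X] {f : X → Matrix m m 𝕜}
    (hf : Continuous f) (hu : ∀ x, IsUnit (1 + f x)) : Continuous fun x => (1 + f x)⁻¹ :=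
  continuous_iff_continuousAt.mpr fun x =>
    (continuousAt_inv_of_isUnit (hu x)).comp (f := fun x => 1 + f x)
      (continuous_const.add hf).continuousAt

theorem Filter.Tendsto.matrix_inv_one_add {X : Type*} {l : Filter X} {f : X → Matrix m m 𝕜}
    (hf : Tendsto f l (𝓝 0)) : Tendsto (fun x => (1 + f x)⁻¹) l (𝓝 1) := by
  have h := (continuousAt_inv_of_isUnit (isUnit_one (M := Matrix m m 𝕜))).tendsto.comp
    (by simpa using (tendsto_const_nhds (x := (1 : Matrix m m 𝕜))).add hf)
  simpa [Function.comp_def] using h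

def Matrix.mulCLM : Matrix m m 𝕜 →L[ℝ] Matrix m m 𝕜 →L[ℝ] Matrix m m 𝕜 :=
  (LinearMap.mul ℝ (Matrix m m 𝕜)).toContinuousBilinearMap

def Matrix.traceMulCLM : Matrix m m 𝕜 →L[ℝ] Matrix m m 𝕜 →L[ℝ] 𝕜 :=
  ((LinearMap.mul ℝ (Matrix m m 𝕜)).compr₂ (traceLinearMap m ℝ 𝕜)).toContinuousBilinearMap

theorem HasDerivAt.matrix_mul {f g : ℝ → Matrix m m 𝕜} {f' g' : Matrix m m 𝕜} {t : ℝ}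
    (hf : HasDerivAt f f' t) (hg : HasDerivAt g g' t) :
    HasDerivAt (fun s => f s * g s) (f' * g t + f t * g') t :=
  (mulCLM.hasDerivAt_of_bilinear (fun _ => hf) (fun _ => hg)).congr_deriv (add_comm _ _)

theorem trace_inv_one_add_mul_deriv_add_add_mul {f g : ℝ → Matrix m m 𝕜} {t : ℝ}
    (hf : DifferentiableAt ℝ f t) (hg : DifferentiableAt ℝ g t)
    (hfu : IsUnit (1 + f t)) (hgu : IsUnit (1 + g t)) :
    trace ((1 + (f t + g t + f t * g t))⁻¹ * deriv (fun s => f s + g s + f s * g s) t) =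
      trace ((1 + f t)⁻¹ * deriv f t) + trace ((1 + g t)⁻¹ * deriv g t) := by
  have hfactor : ∀ s, f s + g s + f s * g s = (1 + f s) * (1 + g s) - 1 := fun s => by
    noncomm_ring
  have hderiv := ((hf.hasDerivAt.const_add 1).matrix_mul (hg.hasDerivAt.const_add 1)).sub_const 1
  simp only [← hfactor] at hderiv
  rw [show deriv (fun s => f s + g s + f s * g s) t = _ from hderiv.deriv, hfactor,
    add_sub_cancel]
  exact trace_inv_mul_leibniz hfu hgu

theorem SchwartzMap.integrable_trace_inv_one_add_mul_deriv (A : SchwartzMap ℝ (Matrix m m 𝕜))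
    (hA : ∀ t, IsUnit (1 + A t)) : Integrable fun t => trace ((1 + A t)⁻¹ * deriv A t) := by
  have hcont := A.continuous.matrix_inv_one_add hA
  obtain ⟨C, hC⟩ :=
    hcont.exists_norm_le_of_tendsto_cocompact A.tendsto_cocompact.matrix_inv_one_add
  have hmeas : AEStronglyMeasurable (fun t => (1 + A t)⁻¹) :=
    -- instance search does not find metrizability for `Matrix`'s own (product) topology
    haveI : TopologicalSpace.PseudoMetrizableSpace (Matrix m m 𝕜) :=
      inferInstanceAs (TopologicalSpace.PseudoMetrizableSpace (m → m → 𝕜))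
    hcont.aestronglyMeasurable
  exact traceMulCLM.integrable_of_bilin_of_bdd_left C hmeas
    (ae_of_all _ hC) (derivCLM ℝ _ A).integrable

end MatrixAnalysis

theorem odd_index_additive {n : ℕ}
    (A B : SchwartzMap ℝ (Matrix (Fin n) (Fin n) ℂ))
    (hA : ∀ t : ℝ, IsUnit (1 + A t)) (hB : ∀ t : ℝ, IsUnit (1 + B t))
    (C : ℝ → Matrix (Fin n) (Fin n) ℂ)
    (hC : C = fun t => A t + B t + A t * B t) :
    oddIndex C = oddIndex (⇑A) + oddIndex (⇑B) := by
  subst hC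
  have hsplit (t : ℝ) := trace_inv_one_add_mul_deriv_add_add_mul A.differentiableAt
    B.differentiableAt (hA t) (hB t)
  simp only [oddIndex, hsplit, integral_add (A.integrable_trace_inv_one_add_mul_deriv hA)
    (B.integrable_trace_inv_one_add_mul_deriv hB), mul_add]

end
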